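/- arXiv:2411.01247 — 2 statements merged into one kernel-verified Lean document; each statement's English description precedes it below -/
import Mathlib

section
/- For every integer d ≥ 2 and all x, y ∈ [0,1] with |x − y| ≤ 1/(2^{d+1}·d), one has |ρ_d(x) − ρ_d(y)| ≤ K₂(d)·|x − y|, where K₂(d) = (d(d+1)/2)·(4^d + (2√d)^{d+3}·ω_{d−1}) and ω_{d−1} is the Lebesgue volume of the unit Euclidean ball in ℝ^{d−1}. -/
open MeasureTheory Set

noncomputable section

def DeltaDom (d : ℕ) (x : ℝ) : Set (Fin d → ℝ) :=
  {p | (∀ k, |p k| ≤ 1) ∧ |∑ k : Fin d, p k * x ^ ((k : ℕ) + 1)| ≤ 1}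

/-- Koleda's density function `ρ_d`. -/
def rho (d : ℕ) (x : ℝ) : ℝ :=
  ∫ p in DeltaDom d x, |∑ k : Fin d, (((k : ℕ) : ℝ) + 1) * p k * x ^ (k : ℕ)|

/-- `ω_k`: Lebesgue volume of the unit Euclidean ball in `ℝ^k`. -/
def ballVol (k : ℕ) : ℝ :=
  (volume (Metric.ball (0 : EuclideanSpace ℝ (Fin k)) 1)).toReal

def K2 (d : ℕ) : ℝ :=
  ((d : ℝ) * ((d : ℝ) + 1) / 2) *
    ((4 : ℝ) ^ d + (2 * Real.sqrt d) ^ (d + 3) * ballVol (d - 1))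

/-!
Write `P_p(x) = ∑ p_k x^k`, `A_x = DeltaDom d x` and `M = d(d+1)/2`, a bound for `|P_p'|` on the
cube `[-1, 1]^d`. Then `ρ(x) - ρ(y)` splits as `∫_{A_x} (|P_p'(x)| - |P_p'(y)|)`, at most
`2^d · d M |x - y|` because `x ↦ P_p'(x)` is `d M`-Lipschitz, plus
`∫_{A_x} |P_p'(y)| - ∫_{A_y} |P_p'(y)|`, at most `M · vol(A_x Δ A_y)`. Each half of the symmetric
difference lies in two slabs of width `O(|x - y|)`, so the total constant is `2^d d M (1 + 2M)`,
which is below `K₂(d)` because the unit ball of `ℝ^(d-1)` contains a cube of side `2/√d`.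
-/

theorem mem_Icc_neg_one_one_iff {ι : Type*} {p : ι → ℝ} :
    p ∈ Icc (-1) 1 ↔ ∀ k, |p k| ≤ 1 := by
  simp [Pi.le_def, abs_le, forall_and]

theorem abs_sum_mul_le_sum_abs {ι : Type*} [Fintype ι] {p : ι → ℝ} (hp : p ∈ Icc (-1) 1)
    (c : ι → ℝ) : |∑ k, p k * c k| ≤ ∑ k, |c k| := by
  refine (Finset.abs_sum_le_sum_abs _ _).trans (Finset.sum_le_sum fun k _ ↦ ?_)
  rw [abs_mul]
  exact mul_le_of_le_one_left (abs_nonneg _) (mem_Icc_neg_one_one_iff.mp hp k)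

theorem abs_pow_sub_pow_le_of_mem_Icc {x y : ℝ} (hx : x ∈ Icc 0 1) (hy : y ∈ Icc 0 1) (n : ℕ) :
    |x ^ n - y ^ n| ≤ n * |x - y| := by
  have hmax : max |x| |y| ≤ 1 := max_le (abs_le.mpr ⟨by linarith [hx.1], hx.2⟩)
    (abs_le.mpr ⟨by linarith [hy.1], hy.2⟩)
  calc |x ^ n - y ^ n| ≤ |x - y| * n * max |x| |y| ^ (n - 1) := abs_pow_sub_pow_le ..
    _ ≤ |x - y| * n * 1 := by gcongr; exact pow_le_one₀ (by positivity) hmax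
    _ = n * |x - y| := by ring

theorem sum_fin_cast_add_one (d : ℕ) : ∑ k : Fin d, ((k : ℝ) + 1) = d * (d + 1) / 2 := by
  induction d with
  | zero => simp
  | succ d ih =>
    rw [Fin.sum_univ_castSucc]
    simp only [Fin.val_castSucc, ih, Fin.val_last]
    push_cast
    ring

/-- `polyEval d p x` is the paper's `∑_{k=1}^d p_k x^k`: the coordinate `p k` of `p : Fin d → ℝ`
is the coefficient of `x ^ (k + 1)`. -/
def polyEval (d : ℕ) (p : Fin d → ℝ) (x : ℝ) : ℝ :=
  ∑ k : Fin d, p k * x ^ ((k : ℕ) + 1)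

def polyDerivEval (d : ℕ) (p : Fin d → ℝ) (x : ℝ) : ℝ :=
  ∑ k : Fin d, (((k : ℕ) : ℝ) + 1) * p k * x ^ (k : ℕ)

theorem rho_eq_setIntegral (d : ℕ) (x : ℝ) :
    rho d x = ∫ p in DeltaDom d x, |polyDerivEval d p x| := rfl

section Bounds

variable {d : ℕ} {p : Fin d → ℝ} {x y : ℝ}

theorem abs_polyEval_le (hp : p ∈ Icc (-1) 1) (hx : x ∈ Icc 0 1) : |polyEval d p x| ≤ d * x :=
  calc |polyEval d p x| ≤ ∑ k : Fin d, |x ^ ((k : ℕ) + 1)| := abs_sum_mul_le_sum_abs hp _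
    _ ≤ ∑ _k : Fin d, x := Finset.sum_le_sum fun k _ ↦ by
      rw [abs_of_nonneg (pow_nonneg hx.1 _)]
      exact pow_le_of_le_one hx.1 hx.2 (Nat.succ_ne_zero _)
    _ = d * x := by simp

theorem abs_polyEval_sub_le (hp : p ∈ Icc (-1) 1) (hx : x ∈ Icc 0 1) (hy : y ∈ Icc 0 1) :
    |polyEval d p x - polyEval d p y| ≤ d * (d + 1) / 2 * |x - y| := by
  calc |polyEval d p x - polyEval d p y|
      = |∑ k : Fin d, p k * (x ^ ((k : ℕ) + 1) - y ^ ((k : ℕ) + 1))| := by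
        simp only [polyEval, ← Finset.sum_sub_distrib, mul_sub]
    _ ≤ ∑ k : Fin d, ((k : ℝ) + 1) * |x - y| := (abs_sum_mul_le_sum_abs hp _).trans <|
        Finset.sum_le_sum fun k _ ↦ by exact_mod_cast abs_pow_sub_pow_le_of_mem_Icc hx hy _
    _ = d * (d + 1) / 2 * |x - y| := by rw [← Finset.sum_mul, sum_fin_cast_add_one]

theorem abs_polyDerivEval_le (hp : p ∈ Icc (-1) 1) (hx : x ∈ Icc 0 1) :
    |polyDerivEval d p x| ≤ d * (d + 1) / 2 := by
  calc |polyDerivEval d p x| = |∑ k : Fin d, p k * (((k : ℝ) + 1) * x ^ (k : ℕ))| := by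
        simp only [polyDerivEval]
        congr 1
        exact Finset.sum_congr rfl fun _ _ ↦ by ring
    _ ≤ ∑ k : Fin d, ((k : ℝ) + 1) := (abs_sum_mul_le_sum_abs hp _).trans <|
        Finset.sum_le_sum fun k _ ↦ by
          rw [abs_mul, abs_of_nonneg (by positivity), abs_of_nonneg (pow_nonneg hx.1 _)]
          exact mul_le_of_le_one_right (by positivity) (pow_le_one₀ hx.1 hx.2)
    _ = d * (d + 1) / 2 := sum_fin_cast_add_one d

theorem abs_polyDerivEval_sub_le (hp : p ∈ Icc (-1) 1) (hx : x ∈ Icc 0 1) (hy : y ∈ Icc 0 1) :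
    |polyDerivEval d p x - polyDerivEval d p y| ≤ d * (d * (d + 1) / 2) * |x - y| := by
  calc |polyDerivEval d p x - polyDerivEval d p y|
      = |∑ k : Fin d, p k * (((k : ℝ) + 1) * (x ^ (k : ℕ) - y ^ (k : ℕ)))| := by
        simp only [polyDerivEval, ← Finset.sum_sub_distrib]
        congr 1
        exact Finset.sum_congr rfl fun _ _ ↦ by ring
    _ ≤ ∑ k : Fin d, ((k : ℝ) + 1) * (d * |x - y|) := (abs_sum_mul_le_sum_abs hp _).trans <|
        Finset.sum_le_sum fun k _ ↦ by
          rw [abs_mul, abs_of_nonneg (by positivity)]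
          gcongr
          exact (abs_pow_sub_pow_le_of_mem_Icc hx hy _).trans (by gcongr; exact_mod_cast k.2.le)
    _ = d * (d * (d + 1) / 2) * |x - y| := by rw [← Finset.sum_mul, sum_fin_cast_add_one]; ring

end Bounds

theorem DeltaDom_eq_Icc_inter (d : ℕ) (x : ℝ) :
    DeltaDom d x = Icc (-1) 1 ∩ {p | |polyEval d p x| ≤ 1} := by
  ext p
  simp only [DeltaDom, polyEval, mem_inter_iff, mem_ofPred_eq, mem_Icc_neg_one_one_iff]

theorem DeltaDom_subset_Icc (d : ℕ) (x : ℝ) : DeltaDom d x ⊆ Icc (-1) 1 := by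
  rw [DeltaDom_eq_Icc_inter]
  exact inter_subset_left

theorem isCompact_DeltaDom (d : ℕ) (x : ℝ) : IsCompact (DeltaDom d x) := by
  refine isCompact_Icc.of_isClosed_subset ?_ (DeltaDom_subset_Icc d x)
  rw [DeltaDom_eq_Icc_inter]
  exact isClosed_Icc.inter (isClosed_le (by unfold polyEval; fun_prop) continuous_const)

theorem volume_real_DeltaDom_le (d : ℕ) (x : ℝ) : volume.real (DeltaDom d x) ≤ 2 ^ d := by
  refine (measureReal_mono (DeltaDom_subset_Icc d x) isCompact_Icc.measure_lt_top.ne).trans_eq ?_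
  rw [measureReal_def, Real.volume_Icc_pi_toReal (by simp [Pi.le_def])]
  norm_num

theorem DeltaDom_eq_Icc_of_mul_le_one {d : ℕ} {x : ℝ} (hx : x ∈ Icc 0 1) (h : d * x ≤ 1) :
    DeltaDom d x = Icc (-1) 1 := by
  rw [DeltaDom_eq_Icc_inter, inter_eq_left]
  exact fun p hp ↦ (abs_polyEval_le hp hx).trans h

/-- Integrate first over the `i`-th coordinate. -/
theorem volume_Icc_sep_sum_mul_mem_le {n : ℕ} (q : Fin (n + 1) → ℝ) {i : Fin (n + 1)}
    (hq : q i ≠ 0) {s : Set ℝ} (hs : MeasurableSet s) :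
    volume {p ∈ Icc (-1 : Fin (n + 1) → ℝ) 1 | ∑ k, p k * q k ∈ s}
      ≤ 2 ^ n * (ENNReal.ofReal |(q i)⁻¹| * volume s) := by
  let c : (Fin n → ℝ) → ℝ := fun w ↦ ∑ j, w j * q (i.succAbove j)
  let T : Set (ℝ × (Fin n → ℝ)) := {z | z.2 ∈ Icc (-1) 1 ∧ q i * z.1 + c z.2 ∈ s}
  have hT : MeasurableSet T := (measurable_snd measurableSet_Icc).inter
    ((by fun_prop : Measurable fun z : ℝ × (Fin n → ℝ) ↦ q i * z.1 + c z.2) hs)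
  have hsub : {p ∈ Icc (-1 : Fin (n + 1) → ℝ) 1 | ∑ k, p k * q k ∈ s}
      ⊆ MeasurableEquiv.piFinSuccAbove (fun _ ↦ ℝ) i ⁻¹' T := by
    rintro p ⟨⟨hp₁, hp₂⟩, hps⟩
    refine ⟨⟨fun j ↦ hp₁ _, fun j ↦ hp₂ _⟩, ?_⟩
    rw [Fin.sum_univ_succAbove _ i] at hps
    simpa [c, Fin.removeNth, mul_comm] using hps
  have hfiber (w : Fin n → ℝ) : volume ((fun t ↦ (t, w)) ⁻¹' T)
      ≤ (Icc (-1) 1).indicator (fun _ ↦ ENNReal.ofReal |(q i)⁻¹| * volume s) w := by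
    by_cases hw : w ∈ Icc (-1) 1
    · rw [indicator_of_mem hw, ← measure_preimage_add_right volume (c w) s,
        ← Real.volume_preimage_mul_left hq]
      exact measure_mono fun t ht ↦ ht.2
    · have hempty : (fun t ↦ (t, w)) ⁻¹' T = ∅ := eq_empty_of_forall_notMem fun t ht ↦ hw ht.1
      rw [hempty, measure_empty]
      exact bot_le
  calc volume {p ∈ Icc (-1 : Fin (n + 1) → ℝ) 1 | ∑ k, p k * q k ∈ s}
      ≤ volume (MeasurableEquiv.piFinSuccAbove (fun _ ↦ ℝ) i ⁻¹' T) := measure_mono hsub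
    _ = ∫⁻ w, volume ((fun t ↦ (t, w)) ⁻¹' T) := by
      rw [(volume_preserving_piFinSuccAbove (fun _ ↦ ℝ) i).measure_preimage hT.nullMeasurableSet,
        Measure.volume_eq_prod, Measure.prod_apply_symm hT]
    _ ≤ ∫⁻ w, (Icc (-1) 1).indicator (fun _ ↦ ENNReal.ofReal |(q i)⁻¹| * volume s) w :=
      lintegral_mono hfiber
    _ = 2 ^ n * (ENNReal.ofReal |(q i)⁻¹| * volume s) := by
      rw [lintegral_indicator_const measurableSet_Icc, Real.volume_Icc_pi, mul_comm]
      norm_num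

theorem DeltaDom_sdiff_subset {d : ℕ} {u v : ℝ} (hu : u ∈ Icc 0 1) (hv : v ∈ Icc 0 1) :
    DeltaDom d u \ DeltaDom d v ⊆ {p ∈ Icc (-1) 1 | polyEval d p v ∈
      Ioc 1 (1 + d * (d + 1) / 2 * |u - v|) ∪ Ico (-(1 + d * (d + 1) / 2 * |u - v|)) (-1)} := by
  intro p ⟨hpu, hpv⟩
  rw [DeltaDom_eq_Icc_inter] at hpu hpv
  have hcube := hpu.1
  have hgt : 1 < |polyEval d p v| := lt_of_not_ge fun h ↦ hpv ⟨hcube, h⟩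
  have hle : |polyEval d p v| ≤ 1 + d * (d + 1) / 2 * |u - v| := by
    have hlip := abs_polyEval_sub_le hcube hv hu
    have hu₁ : |polyEval d p u| ≤ 1 := hpu.2
    rw [abs_sub_comm v] at hlip
    linarith [abs_sub_abs_le_abs_sub (polyEval d p v) (polyEval d p u)]
  refine ⟨hcube, ?_⟩
  rcases lt_abs.mp hgt with h | h
  · exact Or.inl ⟨h, (le_abs_self _).trans hle⟩
  · exact Or.inr ⟨by linarith [neg_abs_le (polyEval d p v)], by linarith⟩

/-- If `d v ≤ 1` then `DeltaDom d v` is the whole cube; otherwise the coefficient `v > 1/d` of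
`p 0` in `P_p(v)` bounds the width of the slabs of `DeltaDom_sdiff_subset`. -/
theorem volume_real_DeltaDom_sdiff_le {d : ℕ} {u v : ℝ} (hu : u ∈ Icc 0 1) (hv : v ∈ Icc 0 1) :
    volume.real (DeltaDom d u \ DeltaDom d v) ≤ 2 ^ d * d * (d * (d + 1) / 2 * |u - v|) := by
  rcases le_or_gt (d * v) 1 with hsmall | hlarge
  · rw [DeltaDom_eq_Icc_of_mul_le_one hv hsmall, sdiff_eq_empty.mpr (DeltaDom_subset_Icc d u),
      measureReal_empty]
    positivity
  have hsub := DeltaDom_sdiff_subset (d := d) hu hv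
  set δ : ℝ := d * (d + 1) / 2 * |u - v|
  have hδ : 0 ≤ δ := by positivity
  have hv₀ : 0 < v := pos_of_mul_pos_right (one_pos.trans hlarge) (by positivity)
  have hvinv : v⁻¹ ≤ d := by
    rw [inv_le_iff_one_le_mul₀ hv₀]
    exact hlarge.le
  have hs : volume (Ioc 1 (1 + δ) ∪ Ico (-(1 + δ)) (-1)) ≤ ENNReal.ofReal (2 * δ) := by
    refine (measure_union_le _ _).trans ?_
    rw [Real.volume_Ioc, Real.volume_Ico, ← ENNReal.ofReal_add (by linarith) (by linarith)]
    exact ENNReal.ofReal_le_ofReal (by linarith)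
  obtain ⟨n, rfl⟩ : ∃ n, d = n + 1 :=
    Nat.exists_eq_add_one.mpr (Nat.pos_of_ne_zero fun h ↦ by norm_num [h] at hlarge)
  have hvol : volume (DeltaDom (n + 1) u \ DeltaDom (n + 1) v)
      ≤ ENNReal.ofReal (2 ^ n * (v⁻¹ * (2 * δ))) := by
    refine (measure_mono hsub).trans ((volume_Icc_sep_sum_mul_mem_le
      (fun k : Fin (n + 1) ↦ v ^ ((k : ℕ) + 1)) (i := 0) (by positivity)
      (measurableSet_Ioc.union measurableSet_Ico)).trans ?_)
    rw [ENNReal.ofReal_mul (by positivity), ENNReal.ofReal_mul (by positivity),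
      ENNReal.ofReal_pow zero_le_two]
    simp only [Fin.val_zero, zero_add, pow_one, abs_of_pos (inv_pos.mpr hv₀),
      ENNReal.ofReal_ofNat]
    gcongr
  refine (ENNReal.toReal_le_of_le_ofReal (by positivity) hvol).trans ?_
  calc 2 ^ n * (v⁻¹ * (2 * δ)) ≤ 2 ^ n * ((n + 1 : ℕ) * (2 * δ)) := by gcongr
    _ = 2 ^ (n + 1) * (n + 1 : ℕ) * δ := by ring

theorem abs_setIntegral_sub_setIntegral_le {X : Type*} [MeasurableSpace X] {μ : Measure X}
    {f : X → ℝ} {s t : Set X} {C : ℝ} (hs : MeasurableSet s) (ht : MeasurableSet t)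
    (hμs : μ s < ⊤) (hμt : μ t < ⊤) (hf : IntegrableOn f (s ∪ t) μ)
    (hC : ∀ x ∈ s ∪ t, |f x| ≤ C) :
    |∫ x in s, f x ∂μ - ∫ x in t, f x ∂μ| ≤ C * (μ.real (s \ t) + μ.real (t \ s)) := by
  have hst : |∫ x in s \ t, f x ∂μ| ≤ C * μ.real (s \ t) :=
    norm_setIntegral_le_of_norm_le_const (f := f) ((measure_mono sdiff_subset).trans_lt hμs)
      fun x hx ↦ hC x (Or.inl hx.1)
  have hts : |∫ x in t \ s, f x ∂μ| ≤ C * μ.real (t \ s) :=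
    norm_setIntegral_le_of_norm_le_const (f := f) ((measure_mono sdiff_subset).trans_lt hμt)
      fun x hx ↦ hC x (Or.inr hx.1)
  rw [← integral_inter_add_sdiff ht (hf.mono_set subset_union_left),
    ← integral_inter_add_sdiff hs (hf.mono_set subset_union_right), inter_comm t s]
  calc _ = |∫ x in s \ t, f x ∂μ - ∫ x in t \ s, f x ∂μ| := by ring_nf
    _ ≤ |∫ x in s \ t, f x ∂μ| + |∫ x in t \ s, f x ∂μ| := abs_sub _ _
    _ ≤ C * (μ.real (s \ t) + μ.real (t \ s)) := by linarith

section Rho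

variable {d : ℕ} {x y : ℝ}

theorem integrableOn_abs_polyDerivEval {S : Set (Fin d → ℝ)} (hS : IsCompact S) (y : ℝ) :
    IntegrableOn (fun p ↦ |polyDerivEval d p y|) S :=
  (by unfold polyDerivEval; fun_prop : Continuous fun p ↦ |polyDerivEval d p y|).continuousOn
    |>.integrableOn_compact hS

theorem abs_rho_sub_setIntegral_le (hx : x ∈ Icc 0 1) (hy : y ∈ Icc 0 1) :
    |rho d x - (∫ p in DeltaDom d x, |polyDerivEval d p y|)|
      ≤ 2 ^ d * (d * (d * (d + 1) / 2) * |x - y|) := by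
  have hK := isCompact_DeltaDom d x
  rw [rho_eq_setIntegral, ← integral_sub (integrableOn_abs_polyDerivEval hK x)
    (integrableOn_abs_polyDerivEval hK y)]
  calc _ ≤ d * (d * (d + 1) / 2) * |x - y| * volume.real (DeltaDom d x) :=
        norm_setIntegral_le_of_norm_le_const
          (f := fun p ↦ |polyDerivEval d p x| - |polyDerivEval d p y|) hK.measure_lt_top
          fun p hp ↦ (abs_abs_sub_abs_le_abs_sub _ _).trans
            (abs_polyDerivEval_sub_le (DeltaDom_subset_Icc d x hp) hx hy)
    _ ≤ d * (d * (d + 1) / 2) * |x - y| * 2 ^ d := by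
        gcongr
        exact volume_real_DeltaDom_le d x
    _ = 2 ^ d * (d * (d * (d + 1) / 2) * |x - y|) := by ring

theorem abs_setIntegral_sub_rho_le (hx : x ∈ Icc 0 1) (hy : y ∈ Icc 0 1) :
    |(∫ p in DeltaDom d x, |polyDerivEval d p y|) - rho d y|
      ≤ d * (d + 1) / 2 * (2 * (2 ^ d * d * (d * (d + 1) / 2 * |x - y|))) := by
  have hKx := isCompact_DeltaDom d x
  have hKy := isCompact_DeltaDom d y
  refine (abs_setIntegral_sub_setIntegral_le (C := d * (d + 1) / 2) hKx.measurableSet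
    hKy.measurableSet hKx.measure_lt_top hKy.measure_lt_top
    (integrableOn_abs_polyDerivEval (hKx.union hKy) y)
    fun p hp ↦ ?_).trans ?_
  · rw [abs_abs]
    exact abs_polyDerivEval_le (hp.elim (DeltaDom_subset_Icc d x ·) (DeltaDom_subset_Icc d y ·)) hy
  · have hxy := volume_real_DeltaDom_sdiff_le (d := d) hx hy
    have hyx := volume_real_DeltaDom_sdiff_le (d := d) hy hx
    rw [abs_sub_comm y x] at hyx
    gcongr
    linarith

end Rho

/-- The cube `[-a, a]^k` with `a = 1/√(k+1)` lies in the open unit Euclidean ball. -/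
theorem pow_le_ballVol (k : ℕ) : (2 / √((k + 1 : ℕ) : ℝ)) ^ k ≤ ballVol k := by
  set a : ℝ := 1 / √((k + 1 : ℕ) : ℝ)
  have ha : 0 < a := by positivity
  have hsub : WithLp.ofLp ⁻¹' Metric.ball (0 : Fin k → ℝ) a
      ⊆ Metric.ball (0 : EuclideanSpace ℝ (Fin k)) 1 := by
    intro v hv
    rw [mem_preimage, mem_ball_zero_iff, pi_norm_lt_iff ha] at hv
    have hnorm : ‖v‖ ^ 2 < 1 := by
      calc ‖v‖ ^ 2 = ∑ i, ‖v i‖ ^ 2 := EuclideanSpace.norm_sq_eq v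
        _ ≤ ∑ _i : Fin k, a ^ 2 := Finset.sum_le_sum fun i _ ↦ by
            gcongr
            exact (hv i).le
        _ = k / (k + 1) := by
            simp only [Finset.sum_const, Finset.card_univ, Fintype.card_fin, nsmul_eq_mul, a,
              div_pow, Real.sq_sqrt (Nat.cast_nonneg _)]
            push_cast
            ring
        _ < 1 := by rw [div_lt_one (by positivity)]; linarith
    rw [mem_ball_zero_iff]
    nlinarith [norm_nonneg v]
  have hvol := (PiLp.volume_preserving_ofLp (Fin k)).measure_preimage
    measurableSet_ball.nullMeasurableSet ▸ measure_mono hsub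
  rw [Real.volume_pi_ball _ ha, Fintype.card_fin] at hvol
  have := ENNReal.toReal_mono measure_ball_lt_top.ne hvol
  rwa [ENNReal.toReal_ofReal (by positivity), mul_one_div] at this

theorem four_pow_mul_sq_le_mul_ballVol {d : ℕ} (hd : 0 < d) :
    4 ^ (d + 1) * (d : ℝ) ^ 2 ≤ (2 * √(d : ℝ)) ^ (d + 3) * ballVol (d - 1) := by
  have hpow {s : ℝ} (hs : s ≠ 0) (m : ℕ) :
      (2 * s) ^ (m + 4) * (2 / s) ^ m = 4 ^ (m + 2) * (s ^ 2) ^ 2 := by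
    calc (2 * s) ^ (m + 4) * (2 / s) ^ m = 2 ^ (2 * (m + 2)) * (s ^ 2) ^ 2 * (s * s⁻¹) ^ m := by
          ring
      _ = 4 ^ (m + 2) * (s ^ 2) ^ 2 := by rw [mul_inv_cancel₀ hs, pow_mul]; norm_num
  obtain ⟨m, rfl⟩ := Nat.exists_eq_add_one.mpr hd
  calc 4 ^ (m + 1 + 1) * ((m + 1 : ℕ) : ℝ) ^ 2
      = (2 * √((m + 1 : ℕ) : ℝ)) ^ (m + 4) * (2 / √((m + 1 : ℕ) : ℝ)) ^ m := by
        rw [hpow (by positivity), Real.sq_sqrt (by positivity)]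
    _ ≤ (2 * √((m + 1 : ℕ) : ℝ)) ^ (m + 1 + 3) * ballVol (m + 1 - 1) := by
        rw [Nat.add_sub_cancel]
        gcongr
        exact pow_le_ballVol m

theorem lipschitzConst_le_K2 (d : ℕ) :
    2 ^ d * d * (d * (d + 1) / 2) * (1 + d * (d + 1)) ≤ K2 d := by
  rcases Nat.eq_zero_or_pos d with rfl | hd
  · simp [K2]
  have h2d : (d : ℝ) ≤ 2 ^ d := by exact_mod_cast Nat.lt_two_pow_self.le
  have h4 : (4 : ℝ) ^ d = 2 ^ d * 2 ^ d := by rw [← mul_pow]; norm_num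
  have hpoly : 2 ^ d * d * (1 + d * (d + 1)) ≤ (4 : ℝ) ^ d + 4 ^ (d + 1) * d ^ 2 := by
    have ht : (0 : ℝ) ≤ 2 ^ d := by positivity
    rw [pow_succ, h4]
    nlinarith [mul_le_mul_of_nonneg_left h2d ht,
      mul_le_mul_of_nonneg_left h2d (by positivity : (0 : ℝ) ≤ 2 ^ d * d ^ 2),
      mul_le_mul_of_nonneg_left (one_le_pow₀ one_le_two : (1 : ℝ) ≤ 2 ^ d)
        (by positivity : (0 : ℝ) ≤ 2 ^ d * d ^ 2)]
  calc (2 : ℝ) ^ d * d * (d * (d + 1) / 2) * (1 + d * (d + 1))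
      = d * (d + 1) / 2 * (2 ^ d * d * (1 + d * (d + 1))) := by ring
    _ ≤ d * (d + 1) / 2 * (4 ^ d + (2 * √(d : ℝ)) ^ (d + 3) * ballVol (d - 1)) := by
      gcongr
      linarith [four_pow_mul_sq_le_mul_ballVol hd]

theorem stmt7_general (d : ℕ) :
    ∀ x ∈ Set.Icc (0 : ℝ) 1, ∀ y ∈ Set.Icc (0 : ℝ) 1,
      |x - y| ≤ 1 / (2 ^ (d + 1) * (d : ℝ)) →
      |rho d x - rho d y| ≤ K2 d * |x - y| := by
  intro x hx y hy _
  set I := ∫ p in DeltaDom d x, |polyDerivEval d p y|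
  calc |rho d x - rho d y| ≤ |rho d x - I| + |I - rho d y| := abs_sub_le _ _ _
    _ ≤ 2 ^ d * (d * (d * (d + 1) / 2) * |x - y|)
          + d * (d + 1) / 2 * (2 * (2 ^ d * d * (d * (d + 1) / 2 * |x - y|))) :=
      add_le_add (abs_rho_sub_setIntegral_le hx hy) (abs_setIntegral_sub_rho_le hx hy)
    _ = 2 ^ d * d * (d * (d + 1) / 2) * (1 + d * (d + 1)) * |x - y| := by ring
    _ ≤ K2 d * |x - y| := by gcongr; exact lipschitzConst_le_K2 d

theorem stmt7 (d : ℕ) (hd : 2 ≤ d) :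
    ∀ x ∈ Set.Icc (0 : ℝ) 1, ∀ y ∈ Set.Icc (0 : ℝ) 1,
      |x - y| ≤ 1 / (2 ^ (d + 1) * (d : ℝ)) →
      |rho d x - rho d y| ≤ K2 d * |x - y| :=
  stmt7_general d
end
end

section
/- Assume the general counting-measure setup. Let H ≥ 1 be an integer and δ ∈ (0,1). Then for any subinterval I ⊂ [0,1] with 0 < |I| < ν_ρ(δ), one has |(1/|I|)·∫_I (1/ρ(x)) dμ_H(x) − 1| ≤ 2δ/(1−δ) + E(H)/(|I|·min_{[0,1]} ρ), where |I| denotes the length of I. -/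
/-!
On an interval `I` with `|I| < ν_ρ(δ)` the density `ρ` oscillates by at most `δ·min ρ`, so on `I`
it is pinched between its infimum `r` over `I` and `r + δ·min ρ`. Hence `∫_I (1/ρ) dμ_H` lies
between `μ_H(I)/(r + δ·min ρ)` and `μ_H(I)/r`, while `∫_I ρ` lies between `r|I|` and
`(r + δ·min ρ)|I|`. Since `μ_H(I)` and `∫_I ρ` differ by at most `E(H)`, the normalised integral
deviates from `1` by at most `δ + E(H)/(|I|·min ρ)`, and `δ ≤ 2δ/(1-δ)`.
-/

open MeasureTheory Set

noncomputable section

def muH (X : ℕ → Finset ℝ) (H : ℕ) (A : Set ℝ) : ℝ :=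
  (∑ α ∈ X H, Set.indicator A (fun _ => (1 : ℝ)) (Int.fract α)) / ((X H).card : ℝ)

def etaMod (f : ℝ → ℝ) (ε : ℝ) : ℝ :=
  sInf {η : ℝ | 0 < η ∧ ∀ x ∈ Set.Icc (0 : ℝ) 1, ∀ y ∈ Set.Icc (0 : ℝ) 1,
    |x - y| ≤ ε → |f x - f y| ≤ η}

def nuMod (f : ℝ → ℝ) (δ : ℝ) : ℝ :=
  sSup {ε : ℝ | 0 < ε ∧ etaMod f ε ≤ δ * sInf (f '' Set.Icc 0 1)}

/-- The integral `∫_I (1/ρ(x)) dμ_H(x)` of `1/ρ` over `I` against the discrete measure `μ_H`. -/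
def intInvRho (X : ℕ → Finset ℝ) (H : ℕ) (I : Set ℝ) (ρ : ℝ → ℝ) : ℝ :=
  (∑ α ∈ X H, Set.indicator I (fun x => 1 / ρ x) (Int.fract α)) / ((X H).card : ℝ)

theorem abs_sub_le_etaMod {f : ℝ → ℝ} (hf : ContinuousOn f (Icc 0 1)) {ε x y : ℝ}
    (hx : x ∈ Icc (0 : ℝ) 1) (hy : y ∈ Icc (0 : ℝ) 1) (hxy : |x - y| ≤ ε) :
    |f x - f y| ≤ etaMod f ε := by
  obtain ⟨C, hC⟩ := isCompact_Icc.exists_bound_of_continuousOn hf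
  have hC0 : 0 ≤ C := (norm_nonneg _).trans (hC 0 ⟨le_rfl, zero_le_one⟩)
  -- the set defining `etaMod` is nonempty, so its `sInf` is not the junk value `0`
  refine le_csInf ⟨2 * C + 1, by positivity, fun x hx y hy _ => ?_⟩
    fun η hη => hη.2 x hx y hy hxy
  have := hC x hx
  have := hC y hy
  rw [Real.norm_eq_abs] at *
  linarith [abs_sub (f x) (f y)]

theorem abs_sub_le_of_lt_nuMod {f : ℝ → ℝ} (hf : ContinuousOn f (Icc 0 1)) {δ t x y : ℝ}
    (ht : t < nuMod f δ) (hx : x ∈ Icc (0 : ℝ) 1) (hy : y ∈ Icc (0 : ℝ) 1)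
    (hxy : |x - y| ≤ t) :
    |f x - f y| ≤ δ * sInf (f '' Icc 0 1) := by
  have hne : {ε : ℝ | 0 < ε ∧ etaMod f ε ≤ δ * sInf (f '' Icc 0 1)}.Nonempty := by
    by_contra h
    rw [not_nonempty_iff_eq_empty] at h
    rw [nuMod, h, Real.sSup_empty] at ht
    linarith [abs_nonneg (x - y)]
  obtain ⟨ε, ⟨-, hε⟩, htε⟩ := exists_lt_of_lt_csSup hne ht
  exact (abs_sub_le_etaMod hf hx hy (hxy.trans htε.le)).trans hε

theorem Set.OrdConnected.abs_sub_le_volume {I : Set ℝ} (hI : I.OrdConnected)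
    (hfin : volume I ≠ ⊤) {x y : ℝ} (hx : x ∈ I) (hy : y ∈ I) :
    |x - y| ≤ (volume I).toReal := by
  have key : ∀ a ∈ I, ∀ b ∈ I, b - a ≤ (volume I).toReal := fun a ha b hb =>
    calc b - a ≤ volume.real (Icc a b) := by rw [Real.volume_real_Icc]; exact le_max_left _ _
      _ ≤ (volume I).toReal := measureReal_mono (hI.out ha hb) hfin
  exact abs_sub_le_iff.2 ⟨key y hy x hx, key x hx y hy⟩

theorem IsCompact.sInf_image_pos {α : Type*} [TopologicalSpace α] {s : Set α}
    (hs : IsCompact s) (hne : s.Nonempty) {f : α → ℝ} (hf : ContinuousOn f s)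
    (hpos : ∀ x ∈ s, 0 < f x) : 0 < sInf (f '' s) := by
  obtain ⟨x, hx, hfx⟩ := (hs.image_of_continuousOn hf).sInf_mem (hne.image f)
  exact hfx ▸ hpos x hx

theorem exists_forall_mem_Icc_of_abs_sub_le {α : Type*} {f : α → ℝ} {s : Set α} {m c : ℝ}
    (hs : s.Nonempty) (hm : ∀ x ∈ s, m ≤ f x)
    (hc : ∀ x ∈ s, ∀ y ∈ s, |f x - f y| ≤ c) :
    ∃ r, m ≤ r ∧ ∀ x ∈ s, f x ∈ Icc r (r + c) := by
  have hbdd : BddBelow (f '' s) := ⟨m, forall_mem_image.2 hm⟩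
  refine ⟨sInf (f '' s), le_csInf (hs.image f) (forall_mem_image.2 hm), fun x hx =>
    ⟨csInf_le hbdd (mem_image_of_mem f hx), ?_⟩⟩
  have : f x - c ≤ sInf (f '' s) := le_csInf (hs.image f) (forall_mem_image.2 fun y hy => by
    linarith [le_abs_self (f x - f y), hc x hx y hy])
  linarith

section Counting

variable (X : ℕ → Finset ℝ) (H : ℕ) {I : Set ℝ} {ρ : ℝ → ℝ}

theorem intInvRho_mul_le_muH {r : ℝ} (hρ : ∀ x ∈ I, 0 < ρ x)
    (hr : ∀ x ∈ I, r ≤ ρ x) :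
    intInvRho X H I ρ * r ≤ muH X H I := by
  rw [intInvRho, muH, div_mul_eq_mul_div, Finset.sum_mul]
  gcongr with α
  by_cases hα : Int.fract α ∈ I
  · simp only [indicator_of_mem hα]
    rw [one_div_mul_eq_div, div_le_one (hρ _ hα)]
    exact hr _ hα
  · simp [indicator_of_notMem hα]

theorem muH_le_intInvRho_mul {R : ℝ} (hρ : ∀ x ∈ I, 0 < ρ x)
    (hR : ∀ x ∈ I, ρ x ≤ R) :
    muH X H I ≤ intInvRho X H I ρ * R := by
  rw [intInvRho, muH, div_mul_eq_mul_div, Finset.sum_mul]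
  gcongr with α
  by_cases hα : Int.fract α ∈ I
  · simp only [indicator_of_mem hα]
    rw [one_div_mul_eq_div, one_le_div (hρ _ hα)]
    exact hR _ hα
  · simp [indicator_of_notMem hα]

end Counting

theorem abs_div_sub_one_le_of_bounds {P Q A L m r δ E : ℝ} (hL : 0 < L) (hm : 0 < m)
    (hmr : m ≤ r) (hδ : 0 ≤ δ) (hPQ : P * r ≤ Q) (hQP : Q ≤ P * (r + δ * m))
    (hA : r * L ≤ A) (hA' : A ≤ (r + δ * m) * L) (hQA : |Q - A| ≤ E) :
    |1 / L * P - 1| ≤ δ + E / (L * m) := by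
  obtain ⟨e, he0, rfl⟩ : ∃ e, 0 ≤ e ∧ E = e * (L * m) :=
    ⟨E / (L * m), div_nonneg ((abs_nonneg _).trans hQA) (by positivity),
      (div_mul_cancel₀ _ (by positivity)).symm⟩
  rw [mul_div_cancel_right₀ _ (by positivity), one_div_mul_eq_div, abs_le,
    le_sub_iff_add_le', sub_le_iff_le_add', le_div_iff₀ hL, div_le_iff₀ hL]
  rw [abs_le] at hQA
  have hr : 0 < r := hm.trans_le hmr
  constructor
  · -- `(1 - δ - e) L (r + δ m) ≤ r L - e L m ≤ Q ≤ P (r + δ m)`, using `m ≤ r`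
    refine le_of_mul_le_mul_right ?_ (by positivity : 0 < r + δ * m)
    nlinarith [mul_nonneg (mul_nonneg hL.le hδ) (sub_nonneg.2 hmr),
      mul_nonneg (mul_nonneg (mul_nonneg hL.le hδ) hδ) hm.le,
      mul_nonneg (mul_nonneg hL.le he0) (sub_nonneg.2 hmr),
      mul_nonneg (mul_nonneg (mul_nonneg hL.le he0) hδ) hm.le]
  · -- `P r ≤ Q ≤ (r + δ m) L + e L m ≤ (1 + δ + e) L r`, using `m ≤ r`
    refine le_of_mul_le_mul_right ?_ hr
    nlinarith [mul_nonneg (mul_nonneg hL.le hδ) (sub_nonneg.2 hmr),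
      mul_nonneg (mul_nonneg hL.le he0) (sub_nonneg.2 hmr)]

theorem stmt13_general
    (X : ℕ → Finset ℝ)
    (ρ : ℝ → ℝ) (hρc : ContinuousOn ρ (Set.Icc 0 1))
    (hρpos : ∀ x ∈ Set.Icc (0 : ℝ) 1, 0 < ρ x)
    (E : ℕ → ℝ)
    (hE : ∀ H : ℕ, 1 ≤ H → ∀ I : Set ℝ, I ⊆ Set.Icc 0 1 → I.OrdConnected →
      |muH X H I - ∫ x in I, ρ x| ≤ E H)
    (H : ℕ) (hH : 1 ≤ H) (δ : ℝ) (hδ : δ ∈ Set.Ioo (0 : ℝ) 1)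
    (I : Set ℝ) (hI : I ⊆ Set.Icc 0 1) (hIoc : I.OrdConnected)
    (hIpos : 0 < (volume I).toReal) (hIlt : (volume I).toReal < nuMod ρ δ) :
    |(1 / (volume I).toReal) * intInvRho X H I ρ - 1| ≤
      2 * δ / (1 - δ) + E H / ((volume I).toReal * sInf (ρ '' Set.Icc 0 1)) := by
  obtain ⟨hδ0, hδ1⟩ := hδ
  set m := sInf (ρ '' Icc 0 1)
  have hm : 0 < m := isCompact_Icc.sInf_image_pos ⟨0, left_mem_Icc.2 zero_le_one⟩ hρc hρpos
  have hIfin : volume I ≠ ⊤ := ((measure_mono hI).trans_lt (by simp)).ne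
  have hIne : I.Nonempty := nonempty_of_measure_ne_zero (ENNReal.toReal_pos_iff.1 hIpos).1.ne'
  have hosc : ∀ x ∈ I, ∀ y ∈ I, |ρ x - ρ y| ≤ δ * m := fun x hx y hy =>
    abs_sub_le_of_lt_nuMod hρc hIlt (hI hx) (hI hy) (hIoc.abs_sub_le_volume hIfin hx hy)
  have hm_le : ∀ x ∈ I, m ≤ ρ x := fun x hx =>
    csInf_le (isCompact_Icc.image_of_continuousOn hρc).bddBelow (mem_image_of_mem ρ (hI hx))
  obtain ⟨r, hmr, hr⟩ := exists_forall_mem_Icc_of_abs_sub_le hIne hm_le hosc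
  have hρI : ∀ x ∈ I, 0 < ρ x := fun x hx => hρpos x (hI hx)
  have hρint : IntegrableOn ρ I := hρc.integrableOn_Icc.mono_set hI
  have hA : r * (volume I).toReal ≤ ∫ x in I, ρ x :=
    setIntegral_ge_of_const_le_real hIoc.measurableSet hIfin (fun x hx => (hr x hx).1) hρint
  have hA' : ∫ x in I, ρ x ≤ (r + δ * m) * (volume I).toReal :=
    (setIntegral_mono_on hρint (integrableOn_const hIfin) hIoc.measurableSet
      fun x hx => (hr x hx).2).trans_eq (by rw [setIntegral_const, smul_eq_mul, mul_comm]; rfl)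
  have hδ2 : δ ≤ 2 * δ / (1 - δ) := by
    rw [le_div_iff₀ (sub_pos.2 hδ1)]
    nlinarith
  calc _ ≤ δ + E H / ((volume I).toReal * m) :=
        abs_div_sub_one_le_of_bounds hIpos hm hmr hδ0.le
          (intInvRho_mul_le_muH X H hρI fun x hx => (hr x hx).1)
          (muH_le_intInvRho_mul X H hρI fun x hx => (hr x hx).2) hA hA' (hE H hH I hI hIoc)
    _ ≤ _ := by linarith

theorem stmt13
    (X : ℕ → Finset ℝ) (hX : ∀ H : ℕ, 1 ≤ H → (X H).Nonempty)
    (ρ : ℝ → ℝ) (hρc : ContinuousOn ρ (Set.Icc 0 1))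
    (hρpos : ∀ x ∈ Set.Icc (0 : ℝ) 1, 0 < ρ x)
    (hρ1 : (∫ x in (0 : ℝ)..1, ρ x) = 1)
    (E : ℕ → ℝ) (hE0 : ∀ H, 0 ≤ E H)
    (hE : ∀ H : ℕ, 1 ≤ H → ∀ I : Set ℝ, I ⊆ Set.Icc 0 1 → I.OrdConnected →
      |muH X H I - ∫ x in I, ρ x| ≤ E H)
    (H : ℕ) (hH : 1 ≤ H) (δ : ℝ) (hδ : δ ∈ Set.Ioo (0 : ℝ) 1)
    (I : Set ℝ) (hI : I ⊆ Set.Icc 0 1) (hIoc : I.OrdConnected)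
    (hIpos : 0 < (volume I).toReal) (hIlt : (volume I).toReal < nuMod ρ δ) :
    |(1 / (volume I).toReal) * intInvRho X H I ρ - 1| ≤
      2 * δ / (1 - δ) + E H / ((volume I).toReal * sInf (ρ '' Set.Icc 0 1)) :=
  stmt13_general X ρ hρc hρpos E hE H hH δ hδ I hI hIoc hIpos hIlt
end
end
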